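/- arXiv:1112.4892 — 5 statements merged into one kernel-verified Lean document; each statement's English description precedes it below -/
import Mathlib

section
/- Let φ: ℝ → ℝ be continuous and 2π-periodic, and let N ≥ 1 be an integer. Suppose that for every integer λ with 0 ≤ λ ≤ N^N the function e^{iλφ} has absolutely convergent Fourier series, and set Θ = max_{0 ≤ λ ≤ N^N} ‖e^{iλφ}‖_{A(𝕋)}. Let Q and P₀, …, P_{N−1} be integers with 1 ≤ Q ≤ N^N and |(1/(2π))φ(2πj/N)·Q − P_j| ≤ 1/N for j = 0, …, N−1, and define ψ: ℤ/Nℤ → ℝ by ψ(j) = 2πP_j/Q. Then for every integer n with 0 ≤ n ≤ Q−1 one has ‖e^{inψ}‖_{A(𝕋_N)} ≤ 8Θ. -/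
/-!
Sampling `e^{ilφ}` on the grid `2πj/N` folds its Fourier coefficients along the residue classes
mod `N` (aliasing), so the samples have `A(𝕋_N)` norm at most `‖e^{ilφ}‖_{A(𝕋)} ≤ Θ`. For
`0 ≤ n < Q` the Diophantine condition puts `e^{inψ(j)}` within `2π/N` of the `j`-th sample, and
the `A(𝕋_N)` norm is dominated by the `ℓ¹` norm of the values, so the error costs at most `2π`.
Finally `Θ ≥ sup |e^{ilφ}| = 1`, hence `Θ + 2π ≤ 8Θ`.
-/

open scoped Real
open Complex MeasureTheory Filter

/-- The `k`-th Fourier coefficient of a `2π`-periodic function `f : ℝ → ℂ`. -/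
noncomputable def fourierCoeffT (f : ℝ → ℂ) (k : ℤ) : ℂ :=
  (1 / (2 * (π : ℂ))) * ∫ t in (0 : ℝ)..(2 * π), f t * Complex.exp (-Complex.I * (k : ℂ) * (t : ℂ))

/-- The `A(𝕋)` norm: the sum of absolute values of the Fourier coefficients. -/
noncomputable def normAT (f : ℝ → ℂ) : ℝ :=
  ∑' k : ℤ, ‖fourierCoeffT f k‖

/-- The Fourier transform on the cyclic group `ℤ/Nℤ`. -/
noncomputable def dftN (N : ℕ) [NeZero N] (g : ZMod N → ℂ) (k : ZMod N) : ℂ :=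
  (1 / (N : ℂ)) * ∑ j : ZMod N,
    g j * Complex.exp (-(2 * (π : ℂ) * Complex.I) * (j.val : ℂ) * (k.val : ℂ) / (N : ℂ))

/-- The `A(𝕋_N)` norm on the cyclic group `ℤ/Nℤ`. -/
noncomputable def normAN (N : ℕ) [NeZero N] (g : ZMod N → ℂ) : ℝ :=
  ∑ k : ZMod N, ‖dftN N g k‖

instance fact_zero_lt_two_pi : Fact (0 < 2 * π) := ⟨Real.two_pi_pos⟩

lemma fourier_coe_two_pi (k : ℤ) (x : ℝ) :
    fourier k (x : AddCircle (2 * π)) = exp (I * k * x) := by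
  rw [fourier_coe_apply]
  congr 1
  push_cast
  field_simp

lemma fourierCoeff_lift_eq_fourierCoeffT {f : ℝ → ℂ} (hfp : Function.Periodic f (2 * π))
    (k : ℤ) : fourierCoeff hfp.lift k = fourierCoeffT f k := by
  rw [fourierCoeff_eq_intervalIntegral _ k 0, zero_add, Complex.real_smul, fourierCoeffT]
  congr 1
  · push_cast; ring
  · refine intervalIntegral.integral_congr fun t _ => ?_
    simp only [smul_eq_mul, hfp.lift_coe, fourier_coe_two_pi]
    push_cast
    ring_nf

lemma norm_exp_I_mul_intCast_mul_ofReal (k : ℤ) (x : ℝ) : ‖exp (I * k * x)‖ = 1 := by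
  simpa [mul_assoc] using norm_exp_I_mul_ofReal (k * x)

section FourierSeries

variable {f : ℝ → ℂ} (hfc : Continuous f) (hfp : Function.Periodic f (2 * π))
  (hfs : Summable fun k : ℤ => ‖fourierCoeffT f k‖)
include hfc hfp hfs

theorem hasSum_fourierCoeffT_mul_exp (x : ℝ) :
    HasSum (fun k : ℤ => fourierCoeffT f k * exp (I * k * x)) (f x) := by
  let F : C(AddCircle (2 * π), ℂ) := ⟨hfp.lift, continuous_coinduced_dom.mpr hfc⟩
  have hF : Summable (fourierCoeff F) :=
    .of_norm <| by
      simpa only [F, ContinuousMap.coe_mk, fourierCoeff_lift_eq_fourierCoeffT] using hfs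
  simpa only [F, ContinuousMap.coe_mk, fourierCoeff_lift_eq_fourierCoeffT, fourier_coe_two_pi,
    smul_eq_mul, hfp.lift_coe] using has_pointwise_sum_fourier_series_of_summable hF x

theorem norm_le_normAT (x : ℝ) : ‖f x‖ ≤ normAT f := by
  rw [← (hasSum_fourierCoeffT_mul_exp hfc hfp hfs x).tsum_eq, normAT]
  have hnorm : ∀ k : ℤ, ‖fourierCoeffT f k * exp (I * k * x)‖ = ‖fourierCoeffT f k‖ := by
    simp only [norm_mul, norm_exp_I_mul_intCast_mul_ofReal, mul_one, implies_true]
  refine (norm_tsum_le_tsum_norm ?_).trans_eq ?_ <;> simp only [hnorm, hfs]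

end FourierSeries

noncomputable def sampleN (N : ℕ) (f : ℝ → ℂ) (j : ZMod N) : ℂ := f (2 * π * j.val / N)

section CyclicFourier

variable {N : ℕ} [NeZero N]

lemma dftN_add (a b : ZMod N → ℂ) (k : ZMod N) : dftN N (a + b) k = dftN N a k + dftN N b k := by
  simp only [dftN, Pi.add_apply, add_mul, Finset.sum_add_distrib, mul_add]

lemma normAN_add_le (a b : ZMod N → ℂ) : normAN N (a + b) ≤ normAN N a + normAN N b := by
  simp only [normAN, dftN_add, ← Finset.sum_add_distrib]
  exact Finset.sum_le_sum fun k _ => norm_add_le _ _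

lemma norm_dftN_le (g : ZMod N → ℂ) (k : ZMod N) : ‖dftN N g k‖ ≤ (∑ j, ‖g j‖) / N := by
  have hkernel : ∀ j : ZMod N,
      ‖exp (-(2 * (π : ℂ) * I) * (j.val : ℂ) * (k.val : ℂ) / (N : ℂ))‖ = 1 := fun j => by
    rw [← norm_exp_I_mul_ofReal (-(2 * π * j.val * k.val / N))]
    congr 2
    push_cast
    ring
  rw [dftN, norm_mul, one_div, norm_inv, norm_natCast, div_eq_inv_mul]
  gcongr
  refine (norm_sum_le _ _).trans_eq ?_
  simp only [norm_mul, hkernel, mul_one]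

lemma normAN_le_sum_norm (g : ZMod N → ℂ) : normAN N g ≤ ∑ j, ‖g j‖ := by
  calc normAN N g ≤ ∑ _k : ZMod N, (∑ j, ‖g j‖) / N := Finset.sum_le_sum fun k _ => norm_dftN_le g k
    _ = ∑ j, ‖g j‖ := by
      rw [Finset.sum_const, Finset.card_univ, ZMod.card, nsmul_eq_mul]
      field_simp [NeZero.ne N]

lemma normAN_le_add_of_norm_sub_le {a b : ZMod N → ℂ} {ε : ℝ} (h : ∀ j, ‖a j - b j‖ ≤ ε) :
    normAN N a ≤ normAN N b + N * ε :=
  calc normAN N a = normAN N (b + (a - b)) := by rw [add_sub_cancel]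
    _ ≤ normAN N b + ∑ j, ‖a j - b j‖ :=
      (normAN_add_le b (a - b)).trans (add_le_add_right (normAN_le_sum_norm (a - b)) _)
    _ ≤ normAN N b + N * ε := by
      grw [Finset.sum_le_sum fun j _ => h j]
      simp

lemma sampleN_exp_mul_dftN_kernel (m : ℤ) (j k : ZMod N) :
    sampleN N (fun x => exp (I * m * x)) j *
      exp (-(2 * (π : ℂ) * I) * (j.val : ℂ) * (k.val : ℂ) / (N : ℂ)) =
      ZMod.stdAddChar (j * ((m : ZMod N) - k)) := by
  have hcast : j * ((m : ZMod N) - k) = ((j.val * (m - k.val) : ℤ) : ZMod N) := by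
    push_cast
    simp only [ZMod.natCast_zmod_val]
  rw [hcast, ZMod.stdAddChar_coe, sampleN, ← exp_add]
  congr 1
  push_cast
  field_simp
  ring

lemma dftN_sampleN_exp (m : ℤ) (k : ZMod N) :
    dftN N (sampleN N fun x => exp (I * m * x)) k = if (m : ZMod N) = k then 1 else 0 := by
  rw [dftN, Finset.sum_congr rfl fun j _ => sampleN_exp_mul_dftN_kernel m j k,
    AddChar.sum_mulShift _ (ZMod.isPrimitive_stdAddChar N), ZMod.card]
  simp only [sub_eq_zero]
  split_ifs <;> simp [NeZero.ne]

end CyclicFourier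

section Sampling

variable {N : ℕ} [NeZero N] {f : ℝ → ℂ} (hfc : Continuous f) (hfp : Function.Periodic f (2 * π))
  (hfs : Summable fun k : ℤ => ‖fourierCoeffT f k‖)
include hfc hfp hfs

theorem hasSum_dftN_sampleN (k : ZMod N) :
    HasSum (fun m : ℤ => if (m : ZMod N) = k then fourierCoeffT f m else 0)
      (dftN N (sampleN N f) k) := by
  set E : ZMod N → ℂ := fun j => exp (-(2 * (π : ℂ) * I) * (j.val : ℂ) * (k.val : ℂ) / (N : ℂ))
  have hj : ∀ j : ZMod N, HasSum
      (fun m : ℤ => fourierCoeffT f m * (sampleN N (fun x => exp (I * m * x)) j * E j))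
      (sampleN N f j * E j) := fun j => by
    simpa only [sampleN, mul_assoc] using
      (hasSum_fourierCoeffT_mul_exp hfc hfp hfs _).mul_right (E j)
  refine ((hasSum_sum fun j _ => hj j).mul_left (1 / (N : ℂ))).congr_fun fun m => ?_
  rw [← Finset.mul_sum, mul_left_comm, ← dftN, dftN_sampleN_exp]
  split_ifs <;> simp

theorem normAN_sampleN_le_normAT : normAN N (sampleN N f) ≤ normAT f := by
  have hs : ∀ k : ZMod N,
      Summable fun m : ℤ => ‖if (m : ZMod N) = k then fourierCoeffT f m else 0‖ := fun k =>
    hfs.of_nonneg_of_le (fun _ => norm_nonneg _) fun m => by split_ifs <;> simp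
  calc normAN N (sampleN N f)
      ≤ ∑ k : ZMod N, ∑' m : ℤ, ‖if (m : ZMod N) = k then fourierCoeffT f m else 0‖ :=
        Finset.sum_le_sum fun k _ =>
          (hasSum_dftN_sampleN hfc hfp hfs k).tsum_eq ▸ norm_tsum_le_tsum_norm (hs k)
    _ = ∑' m : ℤ, ∑ k : ZMod N, ‖if (m : ZMod N) = k then fourierCoeffT f m else 0‖ :=
        (Summable.tsum_finsetSum fun k _ => hs k).symm
    _ = normAT f := by simp only [apply_ite norm, norm_zero, Finset.sum_ite_eq, Finset.mem_univ,
        if_true, normAT]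

end Sampling

lemma norm_exp_I_mul_sub_exp_I_mul_le (x y : ℝ) :
    ‖exp (I * x) - exp (I * y)‖ ≤ |x - y| := by
  have hfactor : exp (I * x) - exp (I * y) = exp (I * y) * (exp (I * ↑(x - y)) - 1) := by
    rw [mul_sub, ← exp_add, mul_one]
    push_cast
    ring_nf
  rw [hfactor, norm_mul, norm_exp_I_mul_ofReal, one_mul]
  exact Real.norm_exp_I_mul_ofReal_sub_one_le

lemma abs_mul_div_sub_mul_le {n p q y δ : ℝ} (hq : 0 < q) (hn : |n| ≤ q)
    (h : |y * q - p| ≤ δ) : |n * (p / q) - n * y| ≤ δ := by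
  have hnq : |n / q| ≤ 1 := by rwa [abs_div, abs_of_pos hq, div_le_one hq]
  calc |n * (p / q) - n * y| = |n / q| * |y * q - p| := by
        rw [← abs_mul, ← abs_neg]; congr 1; field_simp; ring
    _ ≤ δ := by nlinarith [abs_nonneg (n / q), abs_nonneg (y * q - p)]

lemma norm_exp_I_mul_div_sub_exp_I_mul_le {n p q y δ : ℝ} (hq : 0 < q) (hn : |n| ≤ q)
    (h : |y * q - p| ≤ δ) :
    ‖exp (I * n * ↑(2 * π * p / q)) - exp (I * n * ↑(2 * π * y))‖ ≤ 2 * π * δ :=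
  calc ‖exp (I * n * ↑(2 * π * p / q)) - exp (I * n * ↑(2 * π * y))‖
      = ‖exp (I * ↑(2 * π * (n * (p / q)))) - exp (I * ↑(2 * π * (n * y)))‖ := by
        push_cast; ring_nf
    _ ≤ |2 * π * (n * (p / q)) - 2 * π * (n * y)| := norm_exp_I_mul_sub_exp_I_mul_le _ _
    _ = 2 * π * |n * (p / q) - n * y| := by rw [← mul_sub, abs_mul, abs_of_pos Real.two_pi_pos]
    _ ≤ 2 * π * δ := by gcongr; exact abs_mul_div_sub_mul_le hq hn h

theorem diophantine_discretization_bound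
    (φ : ℝ → ℝ) (hcont : Continuous φ) (hper : Function.Periodic φ (2 * π))
    (N : ℕ) [NeZero N]
    (hsum : ∀ l : ℕ, l ≤ N ^ N →
      Summable fun k : ℤ =>
        ‖fourierCoeffT (fun t : ℝ => Complex.exp (Complex.I * (l : ℂ) * (φ t : ℂ))) k‖)
    (Θ : ℝ)
    (hΘ : Θ = (Finset.range (N ^ N + 1)).sup' ⟨0, Finset.mem_range.2 (Nat.succ_pos _)⟩
      (fun l : ℕ => normAT fun t : ℝ => Complex.exp (Complex.I * (l : ℂ) * (φ t : ℂ))))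
    (Q : ℤ) (hQ₁ : 1 ≤ Q) (hQ₂ : Q ≤ (N : ℤ) ^ N)
    (P : ZMod N → ℤ)
    (hP : ∀ j : ZMod N,
      |(1 / (2 * π)) * φ (2 * π * j.val / N) * (Q : ℝ) - (P j : ℝ)| ≤ 1 / N)
    (ψ : ZMod N → ℝ) (hψ : ∀ j : ZMod N, ψ j = 2 * π * (P j : ℝ) / (Q : ℝ)) :
    ∀ n : ℤ, 0 ≤ n → n ≤ Q - 1 →
      normAN N (fun j : ZMod N => Complex.exp (Complex.I * (n : ℂ) * (ψ j : ℂ))) ≤ 8 * Θ := by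
  intro n hn₀ hnQ
  lift n to ℕ using hn₀ with l
  set f : ℝ → ℂ := fun t => exp (I * l * φ t)
  have hl : l ≤ N ^ N := by exact_mod_cast (show (l : ℤ) ≤ N ^ N by omega)
  have hfc : Continuous f := by fun_prop
  have hfp : Function.Periodic f (2 * π) := fun t => by simp only [f, hper t]
  have hfΘ : normAT f ≤ Θ := hΘ ▸ Finset.le_sup' (fun l : ℕ => normAT fun t => exp (I * l * φ t))
    (Finset.mem_range.2 (Nat.lt_succ_of_le hl))
  have hΘ₁ : 1 ≤ Θ :=
    calc 1 = ‖f 0‖ := by simpa [f, mul_assoc] using (norm_exp_I_mul_ofReal (l * φ 0)).symm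
      _ ≤ Θ := (norm_le_normAT hfc hfp (hsum l hl) 0).trans hfΘ
  have hlQ : |(l : ℝ)| ≤ Q := by
    rw [abs_of_nonneg l.cast_nonneg]
    exact_mod_cast (show (l : ℤ) ≤ Q by omega)
  have herr : ∀ j : ZMod N, ‖exp (I * (l : ℤ) * ψ j) - sampleN N f j‖ ≤ 2 * π * (1 / N) :=
    fun j => by
      have hφ : φ (2 * π * j.val / N) = 2 * π * ((1 / (2 * π)) * φ (2 * π * j.val / N)) := by
        field_simp
      simpa only [hψ j, sampleN, f, ← hφ, Int.cast_natCast, ofReal_natCast] using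
        norm_exp_I_mul_div_sub_exp_I_mul_le (by exact_mod_cast hQ₁) hlQ (hP j)
  calc normAN N (fun j => exp (I * (l : ℤ) * ψ j))
      ≤ normAN N (sampleN N f) + N * (2 * π * (1 / N)) := normAN_le_add_of_norm_sub_le herr
    _ ≤ Θ + 2 * π := by
      grw [normAN_sampleN_le_normAT hfc hfp (hsum l hl), hfΘ]
      rw [mul_one_div, mul_div_cancel₀ _ (NeZero.ne _)]
    _ ≤ 8 * Θ := by nlinarith [Real.pi_lt_d2]
end

section
/- Let f: ℝ → ℂ be continuous, 2π-periodic, with absolutely convergent Fourier series, and let N ≥ 1 be an integer. Define F: ℤ/Nℤ → ℂ by F(j) = f(2πj/N). Then for each k ∈ {0, 1, …, N−1} the Fourier coefficient of F on the cyclic group satisfies F̂(k) = Σ_{ν ∈ ℤ, ν ≡ k (mod N)} f̂(ν), and consequently ‖F‖_{A(𝕋_N)} ≤ ‖f‖_{A(𝕋)}. -/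
open scoped Real
open Complex MeasureTheory Filter

/-!
Sampling the absolutely convergent Fourier series `f t = ∑ ν, f̂ ν * exp (i ν t)` at
`t = 2π j / N` gives `F j = ∑ ν, f̂ ν * ψ (ν * j)` for the standard character `ψ` of `ℤ/Nℤ`,
so each frequency `ν` only contributes through its residue mod `N` (aliasing). Orthogonality of
the characters of `ℤ/Nℤ` then picks out the frequencies `ν ≡ k` in `F̂ k`, and the norm bound is
the triangle inequality on each fibre of `ℤ → ℤ/Nℤ`.
-/

open ZMod

section Circle

local instance fact_two_pi_pos : Fact (0 < 2 * π) := ⟨Real.two_pi_pos⟩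

lemma fourierCoeffT_eq_fourierCoeff_lift {f : ℝ → ℂ} (hper : Function.Periodic f (2 * π))
    (n : ℤ) : fourierCoeffT f n = fourierCoeff (hper.lift : AddCircle (2 * π) → ℂ) n := by
  rw [fourierCoeff_eq_intervalIntegral _ n 0, zero_add, fourierCoeffT, Complex.real_smul]
  push_cast
  congr 1
  refine intervalIntegral.integral_congr fun x _ => ?_
  rw [smul_eq_mul, fourier_coe_apply, hper.lift_coe, mul_comm]
  congr 2
  push_cast
  field_simp

lemma hasSum_fourierCoeffT_mul_exp_s4 {f : ℝ → ℂ} (hcont : Continuous f)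
    (hper : Function.Periodic f (2 * π)) (hsum : Summable fun n : ℤ => ‖fourierCoeffT f n‖)
    (t : ℝ) : HasSum (fun n : ℤ => fourierCoeffT f n * exp (I * n * t)) (f t) := by
  let g : C(AddCircle (2 * π), ℂ) :=
    ⟨hper.lift, (QuotientAddGroup.isQuotientMap_mk _).continuous_iff.mpr hcont⟩
  have hg : fourierCoeff g = fourierCoeffT f :=
    funext fun n => (fourierCoeffT_eq_fourierCoeff_lift hper n).symm
  have hseries := has_pointwise_sum_fourier_series_of_summable (f := g) (hg ▸ hsum.of_norm) t
  convert hseries using 2 with n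
  · rw [hg, smul_eq_mul, fourier_coe_apply]
    congr 2
    push_cast
    field_simp
  · exact (hper.lift_coe t).symm

end Circle

section Cyclic

variable {N : ℕ} [NeZero N]

lemma exp_I_mul_two_pi_val_div_eq_stdAddChar (n : ℤ) (j : ZMod N) :
    exp (I * n * ((2 * π * j.val / N : ℝ) : ℂ)) = stdAddChar ((n : ZMod N) * j) := by
  conv_rhs => rw [← natCast_zmod_val j, ← Int.cast_natCast, ← Int.cast_mul, stdAddChar_coe]
  push_cast
  ring_nf

lemma dftN_eq_inv_mul_dft (g : ZMod N → ℂ) (k : ZMod N) : dftN N g k = (N : ℂ)⁻¹ * 𝓕 g k := by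
  rw [dftN, dft_apply, one_div]
  congr 1
  refine Finset.sum_congr rfl fun j _ => ?_
  have hcast : -(j * k) = (Int.cast (-(j.val * k.val : ℤ)) : ZMod N) := by push_cast; simp
  rw [smul_eq_mul, mul_comm, hcast, stdAddChar_coe]
  push_cast
  ring_nf

lemma sum_stdAddChar_mul (b : ZMod N) :
    ∑ j : ZMod N, stdAddChar (j * b) = if b = 0 then (N : ℂ) else 0 := by
  simpa using AddChar.sum_mulShift b (isPrimitive_stdAddChar N)

lemma dft_eq_mul_tsum_of_hasSum {c : ℤ → ℂ} {g : ZMod N → ℂ}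
    (hg : ∀ j, HasSum (fun n : ℤ => c n * stdAddChar ((n : ZMod N) * j)) (g j)) (k : ZMod N) :
    𝓕 g k = N * ∑' ν : {ν : ℤ // (ν : ZMod N) = k}, c ν := by
  have hdft : HasSum
      (fun n : ℤ => ∑ j, stdAddChar (-(j * k)) • (c n * stdAddChar ((n : ZMod N) * j)))
      (𝓕 g k) := hasSum_sum fun j _ => (hg j).const_smul _
  have hterm : ∀ n : ℤ, ∑ j, stdAddChar (-(j * k)) • (c n * stdAddChar ((n : ZMod N) * j)) =
      Set.indicator {ν : ℤ | (ν : ZMod N) = k} (fun ν => N * c ν) n := by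
    intro n
    have hchar : ∀ j : ZMod N, stdAddChar (-(j * k)) • (c n * stdAddChar ((n : ZMod N) * j)) =
        c n * stdAddChar (j * ((n : ZMod N) - k)) := fun j => by
      rw [smul_eq_mul, mul_left_comm, ← AddChar.map_add_eq_mul]
      ring_nf
    simp only [hchar, ← Finset.mul_sum, sum_stdAddChar_mul, sub_eq_zero, Set.indicator_apply,
      Set.mem_ofPred_eq]
    split_ifs <;> ring
  rw [funext hterm, ← hasSum_subtype_iff_indicator] at hdft
  exact hdft.tsum_eq.symm.trans tsum_mul_left

end Cyclic

lemma sum_norm_tsum_fiber_le {β γ E : Type*} [Fintype γ] [NormedAddCommGroup E] {f : β → E}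
    (hf : Summable fun b => ‖f b‖) (p : β → γ) :
    ∑ c, ‖∑' b : {b // p b = c}, f b‖ ≤ ∑' b, ‖f b‖ :=
  calc ∑ c, ‖∑' b : {b // p b = c}, f b‖
      ≤ ∑ c, ∑' b : {b // p b = c}, ‖f b‖ :=
        Finset.sum_le_sum fun c _ => norm_tsum_le_tsum_norm (hf.subtype _)
    _ = ∑' b, ‖f b‖ := by
        rw [← tsum_fintype (L := SummationFilter.unconditional γ)]
        exact (hf.hasSum.tsum_fiberwise p).tsum_eq

theorem restriction_to_cyclic_group
    (f : ℝ → ℂ) (hcont : Continuous f) (hper : Function.Periodic f (2 * π))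
    (hsum : Summable fun k : ℤ => ‖fourierCoeffT f k‖)
    (N : ℕ) [NeZero N]
    (F : ZMod N → ℂ) (hF : ∀ j : ZMod N, F j = f (2 * π * j.val / N)) :
    (∀ k : ZMod N, dftN N F k = ∑' ν : {ν : ℤ // (ν : ZMod N) = k}, fourierCoeffT f ν) ∧
      normAN N F ≤ normAT f := by
  have hsample : ∀ j, HasSum (fun n : ℤ => fourierCoeffT f n * stdAddChar ((n : ZMod N) * j))
      (F j) := fun j => by
    simpa only [hF, exp_I_mul_two_pi_val_div_eq_stdAddChar] using
      hasSum_fourierCoeffT_mul_exp_s4 hcont hper hsum (2 * π * j.val / N)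
  have hcoeff : ∀ k : ZMod N,
      dftN N F k = ∑' ν : {ν : ℤ // (ν : ZMod N) = k}, fourierCoeffT f ν := fun k => by
    rw [dftN_eq_inv_mul_dft, dft_eq_mul_tsum_of_hasSum hsample,
      inv_mul_cancel_left₀ (Nat.cast_ne_zero.mpr (NeZero.ne N))]
  refine ⟨hcoeff, ?_⟩
  simpa only [normAN, normAT, hcoeff] using sum_norm_tsum_fiber_le hsum (fun ν : ℤ => (ν : ZMod N))
end

section
/- Let (X₁, μ₁) and (X₂, μ₂) be probability spaces and let μ = μ₁ ⊗ μ₂ be the product measure on X₁ × X₂. Let E ⊆ X₁ × X₂ be μ-measurable and let δ ≥ 0. Suppose that for every x₂ ∈ X₂ the section E^{x₂} = {x₁ ∈ X₁ : (x₁, x₂) ∈ E} satisfies min(μ₁(E^{x₂}), 1 − μ₁(E^{x₂})) ≤ δ, and for every x₁ ∈ X₁ the section E^{x₁} = {x₂ ∈ X₂ : (x₁, x₂) ∈ E} satisfies min(μ₂(E^{x₁}), 1 − μ₂(E^{x₁})) ≤ δ. Then min(μ(E), 1 − μ(E)) ≤ 3δ. -/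
open MeasureTheory
open scoped ENNReal

/-!
Suppose both `μ E` and `1 - μ E` exceed `3δ`. Let `B` be the set of columns in which `E` has
measure `> δ` and `A` the set of rows in which `Eᶜ` has measure `> δ`. All other columns of `E`
and rows of `Eᶜ` are `δ`-small, so `μ E ≤ δ + μ₂ B` and `μ Eᶜ ≤ δ + μ₁ A`, whence
`μ₁ A, μ₂ B > 2δ`. By the hypothesis on sections, on the rectangle `A × B` the set `E` is
`δ`-small along rows and `Eᶜ` along columns, so `μ₁ A * μ₂ B ≤ δ * (μ₁ A + μ₂ B)`, which is
impossible when both factors exceed `2δ`.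
-/

open Set

namespace MeasureTheory.Measure

variable {α β : Type*} [MeasurableSpace α] [MeasurableSpace β] {μ : Measure α} {ν : Measure β}
  {E : Set (α × β)} {δ : ℝ≥0∞}

theorem prod_inter_prod_univ_le [SFinite μ] [SFinite ν] (hE : MeasurableSet E) {A : Set α}
    (hA : ∀ x ∈ A, ν (Prod.mk x ⁻¹' E) ≤ δ) : μ.prod ν (E ∩ A ×ˢ univ) ≤ δ * μ A := calc
  μ.prod ν (E ∩ A ×ˢ univ) = ∫⁻ x in A, ν (Prod.mk x ⁻¹' E) ∂μ := by
    rw [← restrict_apply hE, ← restrict_prod_eq_prod_univ, prod_apply hE]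
  _ ≤ ∫⁻ _ in A, δ ∂μ := setLIntegral_mono measurable_const hA
  _ = δ * μ A := setLIntegral_const A δ

theorem prod_inter_univ_prod_le [SFinite μ] [SFinite ν] (hE : MeasurableSet E) {B : Set β}
    (hB : ∀ y ∈ B, μ ((·, y) ⁻¹' E) ≤ δ) : μ.prod ν (E ∩ univ ×ˢ B) ≤ δ * ν B := calc
  μ.prod ν (E ∩ univ ×ˢ B) = ∫⁻ y in B, μ ((·, y) ⁻¹' E) ∂ν := by
    rw [← restrict_apply hE, ← prod_restrict, restrict_univ, prod_apply_symm hE]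
  _ ≤ ∫⁻ _ in B, δ ∂ν := setLIntegral_mono measurable_const hB
  _ = δ * ν B := setLIntegral_const B δ

theorem mul_le_mul_add_of_sections_le [SFinite μ] [SFinite ν] (hE : MeasurableSet E) {A : Set α}
    {B : Set β} (hA : ∀ x ∈ A, ν (Prod.mk x ⁻¹' E) ≤ δ) (hB : ∀ y ∈ B, μ ((·, y) ⁻¹' Eᶜ) ≤ δ) :
    μ A * ν B ≤ δ * (μ A + ν B) := calc
  μ A * ν B = μ.prod ν (A ×ˢ B) := (prod_prod A B).symm
  _ ≤ μ.prod ν (E ∩ A ×ˢ univ) + μ.prod ν (Eᶜ ∩ univ ×ˢ B) := by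
    refine (measure_mono fun p hp => ?_).trans (measure_union_le _ _)
    by_cases hpE : p ∈ E
    · exact Or.inl ⟨hpE, hp.1, trivial⟩
    · exact Or.inr ⟨hpE, trivial, hp.2⟩
  _ ≤ δ * μ A + δ * ν B :=
    add_le_add (prod_inter_prod_univ_le hE hA) (prod_inter_univ_prod_le hE.compl hB)
  _ = δ * (μ A + ν B) := (mul_add δ _ _).symm

variable [IsProbabilityMeasure μ] [IsProbabilityMeasure ν]

theorem prod_le_add_of_forall_notMem_le_fst (hE : MeasurableSet E) {A : Set α}
    (hAc : ∀ x ∉ A, ν (Prod.mk x ⁻¹' E) ≤ δ) : μ.prod ν E ≤ δ + μ A := calc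
  μ.prod ν E ≤ μ.prod ν (E ∩ Aᶜ ×ˢ univ) + μ.prod ν (A ×ˢ univ) := by
    refine (measure_mono fun p hp => ?_).trans (measure_union_le _ _)
    by_cases hpA : p.1 ∈ A
    · exact Or.inr ⟨hpA, trivial⟩
    · exact Or.inl ⟨hp, hpA, trivial⟩
  _ ≤ δ * μ Aᶜ + μ A := by
    gcongr
    · exact prod_inter_prod_univ_le hE hAc
    · simp
  _ ≤ δ + μ A := by
    gcongr
    exact mul_le_of_le_one_right' prob_le_one

theorem prod_le_add_of_forall_notMem_le_snd (hE : MeasurableSet E) {B : Set β}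
    (hBc : ∀ y ∉ B, μ ((·, y) ⁻¹' E) ≤ δ) : μ.prod ν E ≤ δ + ν B := calc
  μ.prod ν E ≤ μ.prod ν (E ∩ univ ×ˢ Bᶜ) + μ.prod ν (univ ×ˢ B) := by
    refine (measure_mono fun p hp => ?_).trans (measure_union_le _ _)
    by_cases hpB : p.2 ∈ B
    · exact Or.inr ⟨trivial, hpB⟩
    · exact Or.inl ⟨hp, trivial, hpB⟩
  _ ≤ δ * ν Bᶜ + ν B := by
    gcongr
    · exact prod_inter_univ_prod_le hE hBc
    · simp
  _ ≤ δ + ν B := by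
    gcongr
    exact mul_le_of_le_one_right' prob_le_one

end MeasureTheory.Measure

theorem ENNReal.mul_add_lt_mul_of_two_mul_lt {δ u a : ℝ≥0∞} (hu : u ≠ ∞) (ha : a ≠ ∞)
    (hδu : 2 * δ < u) (hδa : 2 * δ < a) : δ * (u + a) < u * a := by
  have hδ : δ ≠ ∞ := by
    rintro rfl
    simp at hδu
  lift δ to NNReal using hδ
  lift u to NNReal using hu
  lift a to NNReal using ha
  norm_cast at *
  rw [← NNReal.coe_lt_coe] at *
  push_cast at *
  nlinarith [δ.coe_nonneg]

theorem ENNReal.two_mul_lt_of_three_mul_lt_add {δ a : ℝ≥0∞} (h : 3 * δ < δ + a) : 2 * δ < a := by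
  have hδ : δ ≠ ∞ := by
    rintro rfl
    simp at h
  rwa [show 3 * δ = δ + 2 * δ by ring, ENNReal.add_lt_add_iff_left hδ] at h

theorem sections_small_of_two
    {X₁ X₂ : Type*} [MeasurableSpace X₁] [MeasurableSpace X₂]
    (μ₁ : Measure X₁) (μ₂ : Measure X₂)
    [IsProbabilityMeasure μ₁] [IsProbabilityMeasure μ₂]
    (E : Set (X₁ × X₂)) (hE : MeasurableSet E) (δ : ℝ≥0∞)
    (h₁ : ∀ x₂ : X₂, min (μ₁ {x₁ : X₁ | (x₁, x₂) ∈ E}) (1 - μ₁ {x₁ : X₁ | (x₁, x₂) ∈ E}) ≤ δ)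
    (h₂ : ∀ x₁ : X₁, min (μ₂ {x₂ : X₂ | (x₁, x₂) ∈ E}) (1 - μ₂ {x₂ : X₂ | (x₁, x₂) ∈ E}) ≤ δ) :
    min ((μ₁.prod μ₂) E) (1 - (μ₁.prod μ₂) E) ≤ 3 * δ := by
  by_contra! h
  obtain ⟨hE_lt, hEc_lt⟩ := lt_min_iff.mp h
  rw [← prob_compl_eq_one_sub hE] at hEc_lt
  set A := {x₁ | δ < μ₂ (Prod.mk x₁ ⁻¹' Eᶜ)}
  set B := {x₂ | δ < μ₁ ((·, x₂) ⁻¹' E)}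
  have hA : ∀ x₁ ∈ A, μ₂ (Prod.mk x₁ ⁻¹' E) ≤ δ := fun x₁ (hx₁ : δ < _) => by
    rw [preimage_compl, prob_compl_eq_one_sub (measurable_prodMk_left hE)] at hx₁
    exact (min_le_iff.mp (h₂ x₁)).resolve_right (not_le.mpr hx₁)
  have hB : ∀ x₂ ∈ B, μ₁ ((·, x₂) ⁻¹' Eᶜ) ≤ δ := fun x₂ hx₂ => by
    rw [preimage_compl, prob_compl_eq_one_sub (measurable_prodMk_right hE)]
    exact (min_le_iff.mp (h₁ x₂)).resolve_left (not_le.mpr hx₂)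
  have hA_lt : 2 * δ < μ₁ A := ENNReal.two_mul_lt_of_three_mul_lt_add <| hEc_lt.trans_le <|
    Measure.prod_le_add_of_forall_notMem_le_fst hE.compl fun _ hx => not_lt.mp hx
  have hB_lt : 2 * δ < μ₂ B := ENNReal.two_mul_lt_of_three_mul_lt_add <| hE_lt.trans_le <|
    Measure.prod_le_add_of_forall_notMem_le_snd hE fun _ hx => not_lt.mp hx
  exact (Measure.mul_le_mul_add_of_sections_le hE hA hB).not_gt <|
    ENNReal.mul_add_lt_mul_of_two_mul_lt (measure_ne_top _ _) (measure_ne_top _ _) hA_lt hB_lt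
end

section
/- Let m ≥ 1 and let (X_j, μ_j), j = 1, …, m, be probability spaces; let (X, μ) be their product, X = X₁ × ⋯ × X_m with μ = μ₁ ⊗ ⋯ ⊗ μ_m. Let E ⊆ X be μ-measurable and let δ ≥ 0. Suppose that for each j ∈ {1, …, m} and every choice of points x_i ∈ X_i (i ≠ j), the j-section E^{x₁,…,x_{j−1},x_{j+1},…,x_m} = {x_j ∈ X_j : (x₁, …, x_m) ∈ E} satisfies min(μ_j(section), 1 − μ_j(section)) ≤ δ. Then min(μ(E), 1 − μ(E)) ≤ 3^{m−1} δ. -/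
/-!
Write `δ(s) = min (μ s) (1 - μ s)`; it is `1`-Lipschitz for the pseudometric `μ (s ∆ t)`.
On a product `α × β` of probability spaces, let `A` be the set of `a` whose vertical section
of `E` has measure `> δ₂`. Every vertical section of `E ∆ (A × β)` is the small one among `E_a`
and its complement, so `E ∆ (A × β)` has measure `≤ δ₂`, and by Fubini some horizontal section
`E^b` satisfies `μ (A ∆ E^b) ≤ δ₂`. Hence `δ(E) ≤ δ(A) + δ₂ ≤ δ(E^b) + 2δ₂ ≤ δ₁ + 2δ₂`.
Splitting off one coordinate at a time gives `δ(E) ≤ (2 ^ m - 1) δ ≤ 3 ^ (m - 1) δ`.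
-/

open MeasureTheory
open scoped ENNReal symmDiff

namespace MeasureTheory

variable {α β : Type*} [MeasurableSpace α] [MeasurableSpace β]

namespace Measure

/-- The paper's `δ_{X,μ}(s)`: the distance of `s` from `∅` and from `univ`. -/
noncomputable def trivialDist (μ : Measure α) (s : Set α) : ℝ≥0∞ := min (μ s) (1 - μ s)

@[simp] lemma trivialDist_empty (μ : Measure α) : μ.trivialDist ∅ = 0 := by
  simp [trivialDist]

@[simp] lemma trivialDist_univ (μ : Measure α) [IsProbabilityMeasure μ] :
    μ.trivialDist Set.univ = 0 := by
  simp [trivialDist]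

lemma trivialDist_le_add_measure_symmDiff (μ : Measure α) (s t : Set α) :
    μ.trivialDist s ≤ μ.trivialDist t + μ (s ∆ t) := by
  have hs : μ s ≤ μ t + μ (s ∆ t) := tsub_le_iff_left.1 le_measure_symmDiff
  have ht : μ t ≤ μ s + μ (s ∆ t) :=
    symmDiff_comm s t ▸ tsub_le_iff_left.1 le_measure_symmDiff
  have hs_compl : 1 - μ s ≤ 1 - μ t + μ (s ∆ t) := by
    rw [tsub_le_iff_right]
    calc (1 : ℝ≥0∞) ≤ 1 - μ t + μ t := le_tsub_add
      _ ≤ 1 - μ t + μ (s ∆ t) + μ s := by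
        rw [add_assoc, add_comm (μ (s ∆ t))]
        gcongr
  rw [trivialDist, trivialDist, ← min_add_add_right]
  exact min_le_min hs hs_compl

lemma trivialDist_prod_univ (μ : Measure α) (ν : Measure β) [IsProbabilityMeasure ν]
    (s : Set α) : (μ.prod ν).trivialDist (s ×ˢ Set.univ) = μ.trivialDist s := by
  simp [trivialDist, prod_prod]

lemma prod_apply_le_of_forall_le (μ : Measure α) (ν : Measure β) [IsProbabilityMeasure μ]
    [SFinite ν] {s : Set (α × β)} (hs : MeasurableSet s) {c : ℝ≥0∞}
    (h : ∀ a, ν (Prod.mk a ⁻¹' s) ≤ c) : μ.prod ν s ≤ c := by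
  rw [prod_apply hs]
  calc ∫⁻ a, ν (Prod.mk a ⁻¹' s) ∂μ ≤ ∫⁻ _, c ∂μ := lintegral_mono h
    _ = c := by simp

lemma exists_measure_preimage_le_prod_apply (μ : Measure α) (ν : Measure β) [SFinite μ]
    [IsProbabilityMeasure ν] {s : Set (α × β)} (hs : MeasurableSet s) :
    ∃ b, μ ((·, b) ⁻¹' s) ≤ μ.prod ν s := by
  rw [prod_apply_symm hs]
  exact exists_le_lintegral (measurable_measure_prodMk_right hs).aemeasurable

lemma trivialDist_prod_le (μ : Measure α) (ν : Measure β) [IsProbabilityMeasure μ]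
    [IsProbabilityMeasure ν] {E : Set (α × β)} (hE : MeasurableSet E) {δ₁ δ₂ : ℝ≥0∞}
    (h₁ : ∀ b, μ.trivialDist ((·, b) ⁻¹' E) ≤ δ₁)
    (h₂ : ∀ a, ν.trivialDist (Prod.mk a ⁻¹' E) ≤ δ₂) :
    (μ.prod ν).trivialDist E ≤ δ₁ + 2 * δ₂ := by
  set A : Set α := {a | δ₂ < ν (Prod.mk a ⁻¹' E)}
  have hA : MeasurableSet A :=
    measurableSet_lt measurable_const (measurable_measure_prodMk_left hE)
  set D := E ∆ (A ×ˢ Set.univ)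
  have hD : MeasurableSet D := hE.symmDiff (hA.prod .univ)
  have hD_section : ∀ a, ν (Prod.mk a ⁻¹' D) ≤ δ₂ := by
    intro a
    by_cases ha : a ∈ A
    · have : Prod.mk a ⁻¹' D = (Prod.mk a ⁻¹' E)ᶜ := by ext; simp [D, ha, Set.mem_symmDiff]
      rw [this, prob_compl_eq_one_sub (hE.preimage measurable_prodMk_left)]
      exact (min_le_iff.1 (h₂ a)).resolve_left (not_le.2 ha)
    · have : Prod.mk a ⁻¹' D = Prod.mk a ⁻¹' E := by ext; simp [D, ha, Set.mem_symmDiff]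
      rw [this]
      exact not_lt.1 ha
  have hD_small : μ.prod ν D ≤ δ₂ := prod_apply_le_of_forall_le μ ν hD hD_section
  obtain ⟨b, hb⟩ := exists_measure_preimage_le_prod_apply μ ν hD
  have hD_section_b : (·, b) ⁻¹' D = A ∆ ((·, b) ⁻¹' E) := by
    ext
    simp only [D, Set.mem_preimage, Set.mem_symmDiff, Set.mem_prod, Set.mem_univ, and_true]
    tauto
  have hA_close : μ (A ∆ ((·, b) ⁻¹' E)) ≤ δ₂ := hD_section_b ▸ hb.trans hD_small
  calc (μ.prod ν).trivialDist E ≤ (μ.prod ν).trivialDist (A ×ˢ Set.univ) + δ₂ :=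
        (trivialDist_le_add_measure_symmDiff _ _ _).trans (add_le_add le_rfl hD_small)
    _ = μ.trivialDist A + δ₂ := by rw [trivialDist_prod_univ]
    _ ≤ δ₁ + δ₂ + δ₂ := by
        gcongr
        exact (trivialDist_le_add_measure_symmDiff μ _ _).trans (add_le_add (h₁ b) hA_close)
    _ = δ₁ + 2 * δ₂ := by ring

end Measure

lemma MeasurePreserving.trivialDist_preimage {μ : Measure α} {ν : Measure β} {f : α → β}
    (hf : MeasurePreserving f μ ν) {s : Set β} (hs : NullMeasurableSet s ν) :
    μ.trivialDist (f ⁻¹' s) = ν.trivialDist s := by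
  simp only [Measure.trivialDist, hf.measure_preimage hs]

theorem Measure.trivialDist_pi_le {m : ℕ} {X : Fin m → Type*} [∀ j, MeasurableSpace (X j)]
    (μ : ∀ j, Measure (X j)) [∀ j, IsProbabilityMeasure (μ j)]
    {E : Set (∀ j, X j)} (hE : MeasurableSet E) {δ : ℝ≥0∞}
    (hsec : ∀ j x, (μ j).trivialDist {y | Function.update x j y ∈ E} ≤ δ) :
    (Measure.pi μ).trivialDist E ≤ (2 ^ m - 1 : ℕ) * δ := by
  induction m with
  | zero =>
    rcases E.eq_empty_or_nonempty with rfl | hne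
    · simp
    · simp [hne.eq_univ]
  | succ m ih =>
    obtain ⟨x₀⟩ := nonempty_of_isProbabilityMeasure (μ 0)
    set e := MeasurableEquiv.piFinSuccAbove X 0
    have he : ∀ a b, e.symm (a, b) = Fin.insertNth 0 a b := fun _ _ => rfl
    have hF : MeasurableSet (e.symm ⁻¹' E) := hE.preimage e.symm.measurable
    rw [← (measurePreserving_piFinSuccAbove μ 0).symm.trivialDist_preimage hE.nullMeasurableSet]
    refine (trivialDist_prod_le _ _ hF (δ₁ := δ) (δ₂ := (2 ^ m - 1 : ℕ) * δ)
      (fun b => ?_) fun a => ?_).trans ?_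
    · convert hsec 0 (Fin.insertNth 0 x₀ b) using 2
      ext y
      simp only [Set.mem_preimage, Set.mem_ofPred_eq, he, Fin.update_insertNth]
    · refine ih _ (hF.preimage measurable_prodMk_left) fun j b => ?_
      convert hsec (Fin.succAbove 0 j) (Fin.insertNth 0 a b) using 2
      ext y
      simp only [Set.mem_preimage, Set.mem_ofPred_eq, he, Fin.insertNth_update]
    · have : 2 ^ (m + 1) - 1 = 1 + 2 * (2 ^ m - 1) := by
        have := Nat.one_le_two_pow (n := m)
        rw [pow_succ]
        omega
      rw [this]
      push_cast
      exact le_of_eq (by ring)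

end MeasureTheory

lemma Nat.two_pow_sub_one_le_three_pow_pred (m : ℕ) : 2 ^ m - 1 ≤ 3 ^ (m - 1) := by
  induction m with
  | zero => simp
  | succ m ih =>
    rcases m with _ | m
    · simp
    · have := Nat.one_le_pow m 3 (by norm_num)
      simp only [Nat.add_sub_cancel, pow_succ] at ih ⊢
      omega

theorem sections_small_of_pi_general
    {m : ℕ}
    {X : Fin m → Type*} [∀ j, MeasurableSpace (X j)]
    (μ : ∀ j, Measure (X j)) [∀ j, IsProbabilityMeasure (μ j)]
    (E : Set (∀ j, X j)) (hE : MeasurableSet E) (δ : ℝ≥0∞)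
    (hsec : ∀ (j : Fin m) (x : ∀ i, X i),
      min (μ j {y : X j | Function.update x j y ∈ E})
          (1 - μ j {y : X j | Function.update x j y ∈ E}) ≤ δ) :
    min ((Measure.pi μ) E) (1 - (Measure.pi μ) E) ≤ 3 ^ (m - 1) * δ :=
  calc _ ≤ (2 ^ m - 1 : ℕ) * δ := Measure.trivialDist_pi_le μ hE hsec
    _ ≤ 3 ^ (m - 1) * δ := by
      gcongr
      exact_mod_cast Nat.two_pow_sub_one_le_three_pow_pred m

theorem sections_small_of_pi
    {m : ℕ} (hm : 1 ≤ m)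
    {X : Fin m → Type*} [∀ j, MeasurableSpace (X j)]
    (μ : ∀ j, Measure (X j)) [∀ j, IsProbabilityMeasure (μ j)]
    (E : Set (∀ j, X j)) (hE : MeasurableSet E) (δ : ℝ≥0∞)
    (hsec : ∀ (j : Fin m) (x : ∀ i, X i),
      min (μ j {y : X j | Function.update x j y ∈ E})
          (1 - μ j {y : X j | Function.update x j y ∈ E}) ≤ δ) :
    min ((Measure.pi μ) E) (1 - (Measure.pi μ) E) ≤ 3 ^ (m - 1) * δ :=
  sections_small_of_pi_general μ E hE δ hsec
end

section
/- Let φ: ℝ → ℝ be continuous and 2π-periodic. Suppose there exists an integer n such that both 2π-periodic functions e^{inφ} and e^{i(n+1)φ} have absolutely convergent Fourier series. Then for every m ∈ ℤ the function e^{imφ} has absolutely convergent Fourier series. -/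
/-!
Let `A` be the set of `m : ℤ` for which `exp (i m φ)` has an absolutely convergent Fourier
series. Fourier coefficients of a product are the convolution of the coefficients, and `ℓ¹(ℤ)` is
closed under convolution, so `A` is closed under addition; conjugation reflects the
coefficients, so `A` is closed under negation. Hence `A` is a subgroup of `ℤ`, and it contains
`(n + 1) - n = 1`.
-/

open scoped Real
open Complex MeasureTheory Filter

open scoped ComplexConjugate
open AddCircle

section Convolution

variable {G R : Type*} [AddGroup G] [NormedRing R] {c d : G → R}

lemma summable_norm_mul_apply_sub (hc : Summable fun k => ‖c k‖)
    (hd : Summable fun k => ‖d k‖) :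
    Summable fun p : G × G => ‖c p.2 * d (p.1 - p.2)‖ := by
  let e : G × G ≃ G × G := ⟨fun p => (p.2, p.1 - p.2), fun q => (q.2 + q.1, q.1),
    fun p => Prod.ext (sub_add_cancel _ _) rfl, fun q => Prod.ext rfl (add_sub_cancel_right _ _)⟩
  exact (e.summable_iff.mpr (hc.mul_norm hd) :)

lemma summable_norm_tsum_mul_apply_sub [CompleteSpace R] (hc : Summable fun k => ‖c k‖)
    (hd : Summable fun k => ‖d k‖) :
    Summable fun m => ‖∑' k, c k * d (m - k)‖ :=
  have h := summable_norm_mul_apply_sub hc hd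
  h.prod.of_nonneg_of_le (fun _ => norm_nonneg _) fun m => norm_tsum_le_tsum_norm (h.prod_factor m)

end Convolution

section WienerAlgebra

variable {T : ℝ} [Fact (0 < T)]

def HasAbsSummableFourierCoeff (f : AddCircle T → ℂ) : Prop :=
  Summable fun k => ‖fourierCoeff f k‖

lemma hasAbsSummableFourierCoeff_fourier (n : ℤ) :
    HasAbsSummableFourierCoeff (T := T) (fourier n) := by
  refine summable_of_ne_finset_zero (s := {n}) fun k hk => ?_
  rw [fourierCoeff_fourier, Pi.single_eq_of_ne (Finset.notMem_singleton.mp hk), norm_zero]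

lemma fourierCoeff_mul {f g : AddCircle T → ℂ} (hf : Continuous f)
    (hg : Integrable g haarAddCircle)
    (hf_abs : HasAbsSummableFourierCoeff f) (m : ℤ) :
    fourierCoeff (f * g) m = ∑' k, fourierCoeff f k * fourierCoeff g (m - k) := by
  set c := fourierCoeff f
  have hseries : ∀ x, HasSum (fun k => c k * (fourier (-(m - k)) x • g x))
      (fourier (-m) x • (f * g) x) := by
    intro x
    have hf_series := ((has_pointwise_sum_fourier_series_of_summable (f := ⟨f, hf⟩)
      hf_abs.of_norm x).mul_right (g x)).mul_left (fourier (-m) x : ℂ)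
    have hterm : ∀ k, fourier (-m) x * (c k • fourier k x * g x)
        = c k * (fourier (-(m - k)) x • g x) := fun k => by
      rw [show -(m - k) = -m + k by ring, fourier_add, smul_eq_mul, smul_eq_mul]
      ring
    rw [← funext hterm]
    exact hf_series
  have hnorm : ∀ k x, ‖c k * (fourier (-(m - k)) x • g x)‖ = ‖c k‖ * ‖g x‖ := by
    intro k x
    rw [norm_mul, norm_smul, fourier_apply, Circle.norm_coe, one_mul]
  have hint : ∀ k, Integrable (fun x => c k * (fourier (-(m - k)) x • g x)) haarAddCircle :=
    fun k => (hg.fourier_smul _).const_mul _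
  have hint_sum :
      Summable fun k => ∫ x, ‖c k * (fourier (-(m - k)) x • g x)‖ ∂haarAddCircle := by
    simp only [hnorm, integral_const_mul]
    exact hf_abs.mul_right _
  calc fourierCoeff (f * g) m
      = ∫ x, ∑' k, c k * (fourier (-(m - k)) x • g x) ∂haarAddCircle :=
        integral_congr_ae (ae_of_all _ fun x => (hseries x).tsum_eq.symm)
    _ = ∑' k, c k * fourierCoeff g (m - k) := by
        rw [← integral_tsum_of_summable_integral_norm hint hint_sum]
        simp only [integral_const_mul, fourierCoeff]

lemma HasAbsSummableFourierCoeff.mul {f g : AddCircle T → ℂ} (hf : Continuous f)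
    (hg : Integrable g haarAddCircle) (hf_abs : HasAbsSummableFourierCoeff f)
    (hg_abs : HasAbsSummableFourierCoeff g) : HasAbsSummableFourierCoeff (f * g) := by
  unfold HasAbsSummableFourierCoeff
  simp only [fourierCoeff_mul hf hg hf_abs]
  exact summable_norm_tsum_mul_apply_sub hf_abs hg_abs

lemma fourierCoeff_star (f : AddCircle T → ℂ) (k : ℤ) :
    fourierCoeff (star f) k = conj (fourierCoeff f (-k)) := by
  simp only [fourierCoeff, ← integral_conj, smul_eq_mul, map_mul, neg_neg, fourier_neg]
  rfl

lemma HasAbsSummableFourierCoeff.star {f : AddCircle T → ℂ}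
    (hf : HasAbsSummableFourierCoeff f) :
    HasAbsSummableFourierCoeff (star f) := by
  unfold HasAbsSummableFourierCoeff
  simpa only [fourierCoeff_star, RCLike.norm_conj, Function.comp_def, Equiv.neg_apply] using
    (Equiv.neg ℤ).summable_iff.mpr hf

def wienerExponents (ψ : C(AddCircle T, ℝ)) : AddSubgroup ℤ where
  carrier := {m : ℤ | HasAbsSummableFourierCoeff fun x => exp (I * m * ψ x)}
  zero_mem' := by
    rw [Set.mem_ofPred_eq]
    convert hasAbsSummableFourierCoeff_fourier (T := T) 0 using 1
    ext x
    simp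
  add_mem' {a b} ha hb := by
    have hprod := HasAbsSummableFourierCoeff.mul (by fun_prop)
      ((by fun_prop : Continuous _).integrable_of_hasCompactSupport (.of_compactSpace _)) ha hb
    rw [Set.mem_ofPred_eq]
    convert hprod using 1
    ext x
    simp only [Pi.mul_apply, ← exp_add, Int.cast_add]
    ring_nf
  neg_mem' {a} ha := by
    rw [Set.mem_ofPred_eq]
    convert HasAbsSummableFourierCoeff.star ha using 1
    ext x
    simp only [Pi.star_apply, RCLike.star_def, ← exp_conj, map_mul, conj_I, conj_ofReal,
      map_intCast, Int.cast_neg]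
    ring_nf

lemma mem_wienerExponents {ψ : C(AddCircle T, ℝ)} {m : ℤ} :
    m ∈ wienerExponents ψ ↔ HasAbsSummableFourierCoeff fun x => exp (I * m * ψ x) :=
  Iff.rfl

end WienerAlgebra

instance : Fact (0 < 2 * π) := ⟨Real.two_pi_pos⟩

lemma fourierCoeffT_eq_fourierCoeff (f : AddCircle (2 * π) → ℂ) (k : ℤ) :
    fourierCoeffT (fun t => f t) k = fourierCoeff f k := by
  have hexp : ∀ t : ℝ, fourier (-k) (t : AddCircle (2 * π)) = exp (-I * k * t) := fun t => by
    rw [fourier_coe_apply]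
    congr 1
    field_simp
    push_cast
    ring
  simp only [fourierCoeffT, fourierCoeff_eq_intervalIntegral f k 0, zero_add, hexp, smul_eq_mul,
    real_smul, mul_comm (f _)]
  push_cast
  rfl

theorem all_powers_in_A_of_two_consecutive
    (φ : ℝ → ℝ) (hcont : Continuous φ) (hper : Function.Periodic φ (2 * π))
    (n : ℤ)
    (hn : Summable fun k : ℤ =>
      ‖fourierCoeffT (fun t : ℝ => Complex.exp (Complex.I * (n : ℂ) * (φ t : ℂ))) k‖)
    (hn1 : Summable fun k : ℤ =>
      ‖fourierCoeffT (fun t : ℝ => Complex.exp (Complex.I * ((n : ℂ) + 1) * (φ t : ℂ))) k‖) :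
    ∀ m : ℤ, Summable fun k : ℤ =>
      ‖fourierCoeffT (fun t : ℝ => Complex.exp (Complex.I * (m : ℂ) * (φ t : ℂ))) k‖ := by
  let ψ : C(AddCircle (2 * π), ℝ) := ⟨hper.lift, continuous_coinduced_dom.2 hcont⟩
  have hmem : ∀ m : ℤ, m ∈ wienerExponents ψ ↔ Summable fun k : ℤ =>
      ‖fourierCoeffT (fun t : ℝ => Complex.exp (Complex.I * (m : ℂ) * (φ t : ℂ))) k‖ := by
    intro m
    rw [mem_wienerExponents, HasAbsSummableFourierCoeff]
    simp only [← fourierCoeffT_eq_fourierCoeff]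
    rfl
  have h_one : (1 : ℤ) ∈ wienerExponents ψ := by
    have h_succ : n + 1 ∈ wienerExponents ψ := (hmem _).mpr (by exact_mod_cast hn1)
    simpa using sub_mem h_succ ((hmem n).mpr hn)
  intro m
  exact (hmem m).mp (by simpa using zsmul_mem h_one m)
end
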